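/- arXiv:2101.05844 — 8 statements merged into one kernel-verified Lean document; each statement's English description precedes it below -/
import Mathlib

section
/- Active Set selection criterion (Proposition, Section 4.2): Fix a point (x, x_out, z) ∈ ℝ^n × ℝ^m × ℝ^m. Define the mask I* ∈ {0,1}^{m×n} entrywise by I*[i,j] = 1 if ((1 − z[i])Ľ[i,j] + z[i]Ǔ[i,j] − x[j])·W[i,j] ≥ 0 and I*[i,j] = 0 otherwise. Then for every binary mask I ∈ {0,1}^{m×n} and every neuron i ∈ {1,…,m}, the violations satisfy v_i(I*) ≥ v_i(I); in particular I* maximizes the total violation Σ_{i=1}^m v_i(I) over all binary masks I ∈ {0,1}^{m×n}, i.e., I* is the mask of the most violated Anderson constraint at (x, x_out, z), and the maximization decomposes row-wise. -/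
open Finset

/-- `Ľ[i,j]`: lower corner of the box assigned according to the sign of `W[i,j]`. -/
noncomputable def cLmat {m n : ℕ} (W : Fin m → Fin n → ℝ) (l u : Fin n → ℝ)
    (i : Fin m) (j : Fin n) : ℝ :=
  if 0 ≤ W i j then l j else u j

/-- `Ǔ[i,j]`: upper corner of the box assigned according to the sign of `W[i,j]`. -/
noncomputable def cUmat {m n : ℕ} (W : Fin m → Fin n → ℝ) (l u : Fin n → ℝ)
    (i : Fin m) (j : Fin n) : ℝ :=
  if 0 ≤ W i j then u j else l j

/-- Right-hand side of the Anderson constraint for neuron `i` with mask `I`. -/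
noncomputable def andersonRHS {m n : ℕ} (W : Fin m → Fin n → ℝ) (b : Fin m → ℝ)
    (l u : Fin n → ℝ) (I : Fin m → Fin n → ℝ)
    (x : Fin n → ℝ) (z : Fin m → ℝ) (i : Fin m) : ℝ :=
  (∑ j, W i j * I i j * x j) + z i * b i
    - (∑ j, W i j * I i j * cLmat W l u i j) * (1 - z i)
    + (∑ j, W i j * (1 - I i j) * cUmat W l u i j) * z i

/-- Violation of the Anderson constraint for neuron `i` with mask `I` at
`(x, x_out, z)`. -/
noncomputable def violation {m n : ℕ} (W : Fin m → Fin n → ℝ) (b : Fin m → ℝ)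
    (l u : Fin n → ℝ) (I : Fin m → Fin n → ℝ)
    (x : Fin n → ℝ) (xout z : Fin m → ℝ) (i : Fin m) : ℝ :=
  xout i - andersonRHS W b l u I x z i

/-!
Each entry of the mask enters the right-hand side of the Anderson constraint linearly: the
right-hand side equals `z[i] b[i] + Σ_j (z[i] W[i,j] Ǔ[i,j] − I[i,j] c[i,j])` with
`c[i,j] = ((1 − z[i]) Ľ[i,j] + z[i] Ǔ[i,j] − x[j]) W[i,j]`. The violation is therefore
maximised entrywise by switching `I[i,j]` on exactly when `c[i,j] ≥ 0`, which is `I*`.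
-/

noncomputable def maskCoeff {m n : ℕ} (W : Fin m → Fin n → ℝ) (l u : Fin n → ℝ)
    (x : Fin n → ℝ) (z : Fin m → ℝ) (i : Fin m) (j : Fin n) : ℝ :=
  ((1 - z i) * cLmat W l u i j + z i * cUmat W l u i j - x j) * W i j

lemma andersonRHS_eq_sum_sub_maskCoeff {m n : ℕ} (W : Fin m → Fin n → ℝ) (b : Fin m → ℝ)
    (l u : Fin n → ℝ) (I : Fin m → Fin n → ℝ) (x : Fin n → ℝ) (z : Fin m → ℝ) (i : Fin m) :
    andersonRHS W b l u I x z i =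
      z i * b i + ∑ j, (z i * (W i j * cUmat W l u i j) - I i j * maskCoeff W l u x z i j) := by
  have hsingle : andersonRHS W b l u I x z i = z i * b i + ∑ j, (W i j * I i j * x j
      - W i j * I i j * cLmat W l u i j * (1 - z i) + W i j * (1 - I i j) * cUmat W l u i j * z i) := by
    simp only [andersonRHS, Finset.sum_add_distrib, Finset.sum_sub_distrib, Finset.sum_mul]
    ring
  rw [hsingle]
  unfold maskCoeff
  exact congrArg _ (Finset.sum_congr rfl fun j _ => by ring)

lemma mul_le_ite_nonneg_mul {t c : ℝ} (ht₀ : 0 ≤ t) (ht₁ : t ≤ 1) :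
    t * c ≤ (if 0 ≤ c then 1 else 0) * c := by
  split_ifs <;> nlinarith

lemma andersonRHS_le_of_mem_unitInterval {m n : ℕ} (W : Fin m → Fin n → ℝ) (b : Fin m → ℝ)
    (l u : Fin n → ℝ) (x : Fin n → ℝ) (z : Fin m → ℝ) (I Istar : Fin m → Fin n → ℝ)
    (hIstar : ∀ i j, Istar i j = if 0 ≤ maskCoeff W l u x z i j then 1 else 0)
    (i : Fin m) (hI : ∀ j, 0 ≤ I i j ∧ I i j ≤ 1) :
    andersonRHS W b l u Istar x z i ≤ andersonRHS W b l u I x z i := by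
  rw [andersonRHS_eq_sum_sub_maskCoeff, andersonRHS_eq_sum_sub_maskCoeff]
  refine add_le_add_right (Finset.sum_le_sum fun j _ => ?_) _
  rw [hIstar]
  exact sub_le_sub_left (mul_le_ite_nonneg_mul (hI j).1 (hI j).2) _

theorem activeSet_selection_most_violated_general
    {m n : ℕ} (W : Fin m → Fin n → ℝ) (b : Fin m → ℝ) (l u : Fin n → ℝ)
    (x : Fin n → ℝ) (xout z : Fin m → ℝ)
    (Istar : Fin m → Fin n → ℝ)
    (hIstar : ∀ i j, Istar i j =
      if 0 ≤ ((1 - z i) * cLmat W l u i j + z i * cUmat W l u i j - x j) * W i j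
      then 1 else 0) :
    (∀ I : Fin m → Fin n → ℝ, (∀ i j, I i j = 0 ∨ I i j = 1) →
      ∀ i, violation W b l u I x xout z i ≤ violation W b l u Istar x xout z i) ∧
    (∀ I : Fin m → Fin n → ℝ, (∀ i j, I i j = 0 ∨ I i j = 1) →
      (∑ i, violation W b l u I x xout z i)
        ≤ ∑ i, violation W b l u Istar x xout z i) := by
  have rowwise : ∀ I : Fin m → Fin n → ℝ, (∀ i j, I i j = 0 ∨ I i j = 1) →
      ∀ i, violation W b l u I x xout z i ≤ violation W b l u Istar x xout z i := by
    intro I hI i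
    have hunit : ∀ j, 0 ≤ I i j ∧ I i j ≤ 1 := fun j => by
      rcases hI i j with h | h <;> norm_num [h]
    exact sub_le_sub_left (andersonRHS_le_of_mem_unitInterval W b l u x z I Istar hIstar i hunit) _
  exact ⟨rowwise, fun I hI => Finset.sum_le_sum fun i _ => rowwise I hI i⟩

/-- Active Set selection criterion (Proposition, Section 4.2): the mask `I*`
defined entrywise by the sign test
`((1 − z[i])Ľ[i,j] + z[i]Ǔ[i,j] − x[j])·W[i,j] ≥ 0` maximizes the violation
of the Anderson constraint at every neuron `i` over all binary masks, and
hence also maximizes the total violation; the maximization decomposes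
row-wise. -/
theorem activeSet_selection_most_violated
    {m n : ℕ} (W : Fin m → Fin n → ℝ) (b : Fin m → ℝ) (l u : Fin n → ℝ)
    (hlu : ∀ j, l j ≤ u j)
    (x : Fin n → ℝ) (xout z : Fin m → ℝ)
    (Istar : Fin m → Fin n → ℝ)
    (hIstar : ∀ i j, Istar i j =
      if 0 ≤ ((1 - z i) * cLmat W l u i j + z i * cUmat W l u i j - x j) * W i j
      then 1 else 0) :
    (∀ I : Fin m → Fin n → ℝ, (∀ i j, I i j = 0 ∨ I i j = 1) →
      ∀ i, violation W b l u I x xout z i ≤ violation W b l u Istar x xout z i) ∧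
    (∀ I : Fin m → Fin n → ℝ, (∀ i j, I i j = 0 ∨ I i j = 1) →
      (∑ i, violation W b l u I x xout z i)
        ≤ ∑ i, violation W b l u Istar x xout z i) :=
  activeSet_selection_most_violated_general W b l u x xout z Istar hIstar
end

section
/- Projection of the multiple-choice formulation with pre-activation bounds (Appendix Proposition): Let w ∈ ℝ^n, b ∈ ℝ, l, u ∈ ℝ^n with l ≤ u, and pre-activation bounds l̂ ≤ 0 ≤ û. Define S ⊆ ℝ^n × ℝ × ℝ as the set of (x, y, z) such that there exist x⁰, x¹ ∈ ℝ^n with: x = x⁰ + x¹; w·x⁰ + b(1 − z) ≤ 0; y = w·x¹ + bz and y ≥ 0; l(1 − z) ≤ x⁰ ≤ u(1 − z) entrywise; lz ≤ x¹ ≤ uz entrywise; 0 ≤ z ≤ 1; l̂(1 − z) ≤ w·x⁰ + b(1 − z) ≤ û(1 − z); and l̂z ≤ w·x¹ + bz ≤ ûz. Define A ⊆ ℝ^n × ℝ × ℝ as the set of (x, y, z) such that: l ≤ x ≤ u entrywise; 0 ≤ z ≤ 1; l̂ ≤ w·x + b ≤ û; y ≥ 0; y ≥ w·x + b; y ≤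 ûz; y ≤ (w·x + b) − l̂(1 − z); and for every binary vector ι ∈ {0,1}^n, y ≤ Σ_j w_j ι_j x_j + zb − (Σ_j w_j ι_j Ľ_j)(1 − z) + (Σ_j w_j(1 − ι_j)Ǔ_j)z. Then A equals the projection of S onto the coordinates (x, y, z). -/
open Finset

/-- `Ľ_j`: lower corner of the box assigned according to the sign of `w_j`. -/
noncomputable def cLvec {n : ℕ} (w l u : Fin n → ℝ) (j : Fin n) : ℝ :=
  if 0 ≤ w j then l j else u j

/-- `Ǔ_j`: upper corner of the box assigned according to the sign of `w_j`. -/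
noncomputable def cUvec {n : ℕ} (w l u : Fin n → ℝ) (j : Fin n) : ℝ :=
  if 0 ≤ w j then u j else l j

/-- Right-hand side of the single-neuron Anderson constraint with binary mask `ι`. -/
noncomputable def andersonRHS1 {n : ℕ} (w : Fin n → ℝ) (b : ℝ) (l u : Fin n → ℝ)
    (ι : Fin n → Bool) (x : Fin n → ℝ) (z : ℝ) : ℝ :=
  (∑ j, w j * (if ι j then 1 else 0) * x j) + z * b
    - (∑ j, w j * (if ι j then 1 else 0) * cLvec w l u j) * (1 - z)
    + (∑ j, w j * (if ι j then (0:ℝ) else 1) * cUvec w l u j) * z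

lemma andersonRHS1_eq' {n : ℕ} (w : Fin n → ℝ) (b : ℝ) (l u : Fin n → ℝ)
    (ι : Fin n → Bool) (x : Fin n → ℝ) (z : ℝ) :
    andersonRHS1 w b l u ι x z = z * b +
      ∑ j, (if ι j then w j * x j - w j * cLvec w l u j * (1 - z)
            else w j * cUvec w l u j * z) := by
  unfold andersonRHS1
  have h2 : (∑ j, (if ι j then w j * x j - w j * cLvec w l u j * (1 - z)
            else w j * cUvec w l u j * z))
      = ∑ j, (w j * (if ι j then (1:ℝ) else 0) * x j
      - w j * (if ι j then (1:ℝ) else 0) * cLvec w l u j * (1 - z)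
      + w j * (if ι j then (0:ℝ) else 1) * cUvec w l u j * z) := by
    refine Finset.sum_congr rfl fun j _ => ?_
    by_cases h : ι j <;> simp [h] <;> ring
  rw [Finset.sum_mul, Finset.sum_mul, h2, Finset.sum_add_distrib, Finset.sum_sub_distrib]
  ring

lemma term_easy' (wj lj uj xj x0j x1j z : ℝ)
    (h0l : lj * (1 - z) ≤ x0j) (h0u : x0j ≤ uj * (1 - z))
    (h1l : lj * z ≤ x1j) (h1u : x1j ≤ uj * z)
    (hxj : xj = x0j + x1j) (ι : Bool) :
    wj * x1j ≤ (if ι then wj * xj - wj * (if 0 ≤ wj then lj else uj) * (1 - z)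
       else wj * (if 0 ≤ wj then uj else lj) * z) := by
  by_cases hw : 0 ≤ wj <;> cases ι <;>
    simp only [if_true, if_false, Bool.false_eq_true, hw, if_pos, if_neg, ite_true, ite_false]
  · nlinarith [mul_le_mul_of_nonneg_left h1u hw]
  · nlinarith [mul_le_mul_of_nonneg_left h0l hw]
  · nlinarith [mul_le_mul_of_nonpos_left h1l (le_of_not_ge hw)]
  · nlinarith [mul_le_mul_of_nonpos_left h0u (le_of_not_ge hw)]

lemma a_le_c' (lj uj xj z : ℝ) (hl : lj ≤ xj) (hu : xj ≤ uj) (hz0 : 0 ≤ z) (hz1 : z ≤ 1) :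
    max (lj*z) (xj-uj*(1-z)) ≤ min (uj*z) (xj-lj*(1-z)) := by
  apply max_le <;> apply le_min <;> nlinarith

lemma wm_le' (wj lj uj xj z : ℝ) (hl : lj ≤ xj) (hu : xj ≤ uj) (hz0 : 0 ≤ z) (hz1 : z ≤ 1) :
    wj * (if 0 ≤ wj then max (lj*z) (xj-uj*(1-z)) else min (uj*z) (xj-lj*(1-z)))
      ≤ wj * xj * z := by
  by_cases hw : 0 ≤ wj <;> simp only [hw, if_pos, if_neg, ite_true, ite_false]
  · rcases max_cases (lj*z) (xj-uj*(1-z)) with ⟨h,_⟩|⟨h,_⟩ <;> rw [h] <;>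
      nlinarith [mul_nonneg (mul_nonneg hw hz0) (sub_nonneg.2 hl),
        mul_nonneg (mul_nonneg hw (by linarith : (0:ℝ) ≤ 1 - z)) (sub_nonneg.2 hu)]
  · have hw' : wj ≤ 0 := le_of_not_ge hw
    rcases min_cases (uj*z) (xj-lj*(1-z)) with ⟨h,_⟩|⟨h,_⟩ <;> rw [h] <;>
      nlinarith [mul_nonneg (mul_nonneg (neg_nonneg.2 hw') hz0) (sub_nonneg.2 hu),
        mul_nonneg (mul_nonneg (neg_nonneg.2 hw') (by linarith : (0:ℝ) ≤ 1 - z)) (sub_nonneg.2 hl)]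

lemma term_le_wM' (wj lj uj xj z : ℝ) (hz0 : 0 ≤ z) (hz1 : z ≤ 1) :
    (if (decide (wj*xj - wj*(if 0 ≤ wj then lj else uj)*(1-z) ≤ wj*(if 0 ≤ wj then uj else lj)*z) : Bool)
      then wj*xj - wj*(if 0 ≤ wj then lj else uj)*(1-z)
      else wj*(if 0 ≤ wj then uj else lj)*z)
    ≤ wj * (if 0 ≤ wj then min (uj*z) (xj-lj*(1-z)) else max (lj*z) (xj-uj*(1-z))) := by
  by_cases hw : 0 ≤ wj <;> simp only [hw, if_pos, if_neg, ite_true, ite_false, decide_eq_true_eq]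
  · rcases min_cases (uj*z) (xj-lj*(1-z)) with ⟨h,h'⟩|⟨h,h'⟩ <;> rw [h] <;>
      split_ifs with hc <;> nlinarith
  · rcases max_cases (lj*z) (xj-uj*(1-z)) with ⟨h,h'⟩|⟨h,h'⟩ <;> rw [h] <;>
      split_ifs with hc <;> nlinarith [le_of_not_ge hw]

/-- Projection of the multiple-choice formulation with pre-activation bounds
(Appendix Proposition): the Anderson relaxation `A` with explicit
pre-activation bounds equals the projection onto `(x, y, z)` of the
multiple-choice formulation `S` augmented with the distributed pre-activation
bound constraints. -/
theorem anderson_eq_projection_of_multiple_choice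
    {n : ℕ} (w : Fin n → ℝ) (b : ℝ) (l u : Fin n → ℝ)
    (hlu : ∀ j, l j ≤ u j)
    (lhat uhat : ℝ) (hlhat : lhat ≤ 0) (huhat : 0 ≤ uhat) :
    {p : (Fin n → ℝ) × ℝ × ℝ |
      (∀ j, l j ≤ p.1 j ∧ p.1 j ≤ u j) ∧
      (0 ≤ p.2.2 ∧ p.2.2 ≤ 1) ∧
      (lhat ≤ (∑ j, w j * p.1 j) + b ∧ (∑ j, w j * p.1 j) + b ≤ uhat) ∧
      0 ≤ p.2.1 ∧
      (∑ j, w j * p.1 j) + b ≤ p.2.1 ∧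
      p.2.1 ≤ uhat * p.2.2 ∧
      p.2.1 ≤ ((∑ j, w j * p.1 j) + b) - lhat * (1 - p.2.2) ∧
      (∀ ι : Fin n → Bool, p.2.1 ≤ andersonRHS1 w b l u ι p.1 p.2.2)}
    =
    {p : (Fin n → ℝ) × ℝ × ℝ |
      ∃ x0 x1 : Fin n → ℝ,
        (∀ j, p.1 j = x0 j + x1 j) ∧
        (∑ j, w j * x0 j) + b * (1 - p.2.2) ≤ 0 ∧
        p.2.1 = (∑ j, w j * x1 j) + b * p.2.2 ∧
        0 ≤ p.2.1 ∧
        (∀ j, l j * (1 - p.2.2) ≤ x0 j ∧ x0 j ≤ u j * (1 - p.2.2)) ∧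
        (∀ j, l j * p.2.2 ≤ x1 j ∧ x1 j ≤ u j * p.2.2) ∧
        (0 ≤ p.2.2 ∧ p.2.2 ≤ 1) ∧
        (lhat * (1 - p.2.2) ≤ (∑ j, w j * x0 j) + b * (1 - p.2.2) ∧
          (∑ j, w j * x0 j) + b * (1 - p.2.2) ≤ uhat * (1 - p.2.2)) ∧
        (lhat * p.2.2 ≤ (∑ j, w j * x1 j) + b * p.2.2 ∧
          (∑ j, w j * x1 j) + b * p.2.2 ≤ uhat * p.2.2)} := by
  ext ⟨x, y, z⟩
  simp only [Set.mem_setOf_eq]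
  constructor
  · rintro ⟨hbox, ⟨hz0, hz1⟩, ⟨hpre1, hpre2⟩, hy0, hyge, hyuz, hylhat, hA⟩
    -- construction of the split point
    set m : Fin n → ℝ := fun j =>
      if 0 ≤ w j then max (l j * z) (x j - u j * (1-z))
      else min (u j * z) (x j - l j * (1-z)) with hmdef
    set Mf : Fin n → ℝ := fun j =>
      if 0 ≤ w j then min (u j * z) (x j - l j * (1-z))
      else max (l j * z) (x j - u j * (1-z)) with hMdef
    set Sm := ∑ j, w j * m j with hSmdef
    set SM := ∑ j, w j * Mf j with hSMdef
    -- lower feasibility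
    have hSmT : Sm ≤ y - b * z := by
      have h1 : Sm ≤ ∑ j, w j * x j * z :=
        Finset.sum_le_sum fun j _ =>
          wm_le' (w j) (l j) (u j) (x j) z (hbox j).1 (hbox j).2 hz0 hz1
      have h2 : ∑ j, w j * x j * z = (∑ j, w j * x j) * z := (Finset.sum_mul _ _ _).symm
      nlinarith [mul_le_mul_of_nonneg_left hyge hz0, mul_nonneg (sub_nonneg.2 hz1) hy0]
    -- upper feasibility via the Anderson constraint with the argmin mask
    have hTSM : y - b * z ≤ SM := by
      set ι0 : Fin n → Bool := fun j =>
        decide (w j * x j - w j * cLvec w l u j * (1 - z) ≤ w j * cUvec w l u j * z) with hι0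
      have hAι := hA ι0
      rw [andersonRHS1_eq'] at hAι
      have hterm : ∀ j ∈ Finset.univ,
          (if ι0 j then w j * x j - w j * cLvec w l u j * (1 - z)
           else w j * cUvec w l u j * z) ≤ w j * Mf j := by
        intro j _
        have := term_le_wM' (w j) (l j) (u j) (x j) z hz0 hz1
        simpa [hι0, cLvec, cUvec, hMdef] using this
      have := Finset.sum_le_sum hterm
      linarith
    have hSmSM : Sm ≤ SM := le_trans hSmT hTSM
    -- interpolation parameter
    set t : ℝ := if SM - Sm = 0 then 0 else (y - b * z - Sm) / (SM - Sm) with htdef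
    have ht0 : 0 ≤ t := by
      rw [htdef]; split_ifs with h
      · exact le_rfl
      · exact div_nonneg (by linarith) (by linarith)
    have ht1 : t ≤ 1 := by
      rw [htdef]; split_ifs with h
      · linarith
      · have hpos : 0 < SM - Sm := lt_of_le_of_ne (by linarith) (Ne.symm h)
        rw [div_le_one hpos]; linarith
    have hteq : Sm + t * (SM - Sm) = y - b * z := by
      rw [htdef]; split_ifs with h
      · simp only [zero_mul, add_zero]; linarith
      · rw [div_mul_cancel₀ _ h]; ring
    set x1f : Fin n → ℝ := fun j => m j + t * (Mf j - m j) with hx1f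
    have hx1mem : ∀ j, max (l j * z) (x j - u j * (1-z)) ≤ x1f j
        ∧ x1f j ≤ min (u j * z) (x j - l j * (1-z)) := by
      intro j
      have hac := a_le_c' (l j) (u j) (x j) z (hbox j).1 (hbox j).2 hz0 hz1
      have hm1 : max (l j * z) (x j - u j * (1-z)) ≤ m j
          ∧ m j ≤ min (u j * z) (x j - l j * (1-z)) := by
        rw [hmdef]; dsimp only; split_ifs
        · exact ⟨le_rfl, hac⟩
        · exact ⟨hac, le_rfl⟩
      have hM1 : max (l j * z) (x j - u j * (1-z)) ≤ Mf j
          ∧ Mf j ≤ min (u j * z) (x j - l j * (1-z)) := by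
        rw [hMdef]; dsimp only; split_ifs
        · exact ⟨hac, le_rfl⟩
        · exact ⟨le_rfl, hac⟩
      rw [hx1f]; dsimp only
      constructor
      · nlinarith [mul_nonneg (by linarith : (0:ℝ) ≤ 1 - t) (by linarith [hm1.1] :
            (0:ℝ) ≤ m j - max (l j * z) (x j - u j * (1-z))),
          mul_nonneg ht0 (by linarith [hM1.1] :
            (0:ℝ) ≤ Mf j - max (l j * z) (x j - u j * (1-z)))]
      · nlinarith [mul_nonneg (by linarith : (0:ℝ) ≤ 1 - t) (by linarith [hm1.2] :
            (0:ℝ) ≤ min (u j * z) (x j - l j * (1-z)) - m j),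
          mul_nonneg ht0 (by linarith [hM1.2] :
            (0:ℝ) ≤ min (u j * z) (x j - l j * (1-z)) - Mf j)]
    have hwx1 : ∑ j, w j * x1f j = y - b * z := by
      have hc : ∀ j ∈ Finset.univ, w j * x1f j
          = w j * m j + t * (w j * Mf j - w j * m j) := fun j _ => by
        rw [hx1f]; ring
      rw [Finset.sum_congr rfl hc, Finset.sum_add_distrib, ← Finset.mul_sum,
        Finset.sum_sub_distrib]
      exact hteq
    have hwx0 : ∑ j, w j * (x j - x1f j) = (∑ j, w j * x j) - (y - b * z) := by
      have hc : ∀ j ∈ Finset.univ, w j * (x j - x1f j)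
          = w j * x j - w j * x1f j := fun j _ => mul_sub _ _ _
      rw [Finset.sum_congr rfl hc, Finset.sum_sub_distrib, hwx1]
    refine ⟨fun j => x j - x1f j, x1f, fun j => by ring, ?_, ?_, hy0, ?_, ?_,
      ⟨hz0, hz1⟩, ⟨?_, ?_⟩, ⟨?_, ?_⟩⟩
    · rw [hwx0]; linarith
    · rw [hwx1]; ring
    · intro j
      have h1 := (hx1mem j).1
      have h2 := (hx1mem j).2
      constructor
      · show l j * (1 - z) ≤ x j - x1f j
        linarith [min_le_right (u j * z) (x j - l j * (1-z))]
      · show x j - x1f j ≤ u j * (1 - z)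
        linarith [le_max_right (l j * z) (x j - u j * (1-z))]
    · intro j
      have h1 := (hx1mem j).1
      have h2 := (hx1mem j).2
      exact ⟨le_trans (le_max_left _ _) h1, le_trans h2 (min_le_left _ _)⟩
    · rw [hwx0]; linarith
    · rw [hwx0]
      nlinarith [mul_nonneg huhat (by linarith : (0:ℝ) ≤ 1 - z)]
    · rw [hwx1]; nlinarith
    · rw [hwx1]; linarith
  · rintro ⟨x0, x1, hx, h0le, hy, hy0, hbox0, hbox1, ⟨hz0, hz1⟩, ⟨hp0l, hp0u⟩, ⟨hp1l, hp1u⟩⟩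
    have hW : (∑ j, w j * x j) = (∑ j, w j * x0 j) + (∑ j, w j * x1 j) := by
      rw [← Finset.sum_add_distrib]
      exact Finset.sum_congr rfl fun j _ => by rw [hx j]; ring
    have hul1 : (0:ℝ) ≤ 1 - z := by linarith
    refine ⟨fun j => ?_, ⟨hz0, hz1⟩, ⟨?_, ?_⟩, hy0, ?_, ?_, ?_, ?_⟩
    · constructor <;> nlinarith [(hbox0 j).1, (hbox0 j).2, (hbox1 j).1, (hbox1 j).2, hx j]
    · nlinarith [hW]
    · nlinarith [hW]
    · -- w x + b ≤ y
      rw [hW]; linarith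
    · linarith
    · -- y ≤ w x + b - lhat (1-z)
      rw [hW]; linarith
    · intro ι
      rw [andersonRHS1_eq', hy]
      have hterm : ∀ j ∈ Finset.univ, w j * x1 j ≤
          (if ι j then w j * x j - w j * cLvec w l u j * (1 - z)
           else w j * cUvec w l u j * z) := by
        intro j _
        have := term_easy' (w j) (l j) (u j) (x j) (x0 j) (x1 j) z
          (hbox0 j).1 (hbox0 j).2 (hbox1 j).1 (hbox1 j).2 (hx j) (ι j)
        simpa [cLvec, cUvec] using this
      have := Finset.sum_le_sum hterm
      linarith
end

section
/- Sufficient statistics for the Lagrangian (core of Fact 3): Let β and β′ be two nonnegative families of dual variables for the Anderson relaxation, i.e., β_{k,0}, β_{k,1}, β′_{k,0}, β′_{k,1} ∈ ℝ^{n_k}_{≥0} and β_{k,I}, β′_{k,I} ∈ ℝ^{n_k}_{≥0} for each layer k ∈ {1, …, n−1} and each mask I ∈ E_k. Suppose that for every layer k: β_{k,0} = β′_{k,0}, β_{k,1} = β′_{k,1}, and the four linearly-sized statistics coincide: Σ_{I∈E_k} β_{k,I} = Σ_{I∈E_k} β′_{k,I}, Σ_{I∈E_k} (W_k ⊙ I)^T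 β_{k,I} = Σ_{I∈E_k} (W_k ⊙ I)^T β′_{k,I}, Σ_{I∈E_k} rowsum(W_k ⊙ I ⊙ Ľ_{k−1}) ⊙ β_{k,I} = Σ_{I∈E_k} rowsum(W_k ⊙ I ⊙ Ľ_{k−1}) ⊙ β′_{k,I}, and Σ_{I∈E_k} rowsum(W_k ⊙ I ⊙ Ǔ_{k−1}) ⊙ β_{k,I} = Σ_{I∈E_k} rowsum(W_k ⊙ I ⊙ Ǔ_{k−1}) ⊙ β′_{k,I}. Then L(x, z, α, β) = L(x, z, α, β′) for all primal points (x, z) and all multipliers α; that is, the Lagrangian depends on the exponentially many dual variables only through these linearly-sized sufficient statistics. -/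
open Finset

/-- Real value of a Boolean mask entry. -/
noncomputable def mval {m n : ℕ} (I : Fin m → Fin n → Bool)
    (i : Fin m) (j : Fin n) : ℝ :=
  if I i j then 1 else 0

/-- Right-hand side of the Anderson constraint for neuron `i` with mask `I`. -/
noncomputable def andRHS {m n : ℕ} (W : Fin m → Fin n → ℝ) (b : Fin m → ℝ)
    (l u : Fin n → ℝ) (I : Fin m → Fin n → Bool)
    (x : Fin n → ℝ) (z : Fin m → ℝ) (i : Fin m) : ℝ :=
  (∑ j, W i j * mval I i j * x j) + z i * b i
    - (∑ j, W i j * mval I i j * cLmat W l u i j) * (1 - z i)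
    + (∑ j, W i j * (1 - mval I i j) * cUmat W l u i j) * z i

/-- The exponential family `E_k` of masks, excluding the all-zero and
all-one masks. -/
def Ek (m n : ℕ) : Finset (Fin m → Fin n → Bool) :=
  Finset.univ.filter (fun I => I ≠ (fun _ _ => false) ∧ I ≠ (fun _ _ => true))

/-- The Lagrangian of the Anderson relaxation (eq. (7)), with hidden layers
`k = 1, …, n−1` and scalar output `W_n x_{n−1} + b_n`. -/
noncomputable def lagr (n : ℕ) (d : ℕ → ℕ)
    (W : (k : ℕ) → Fin (d k) → Fin (d (k-1)) → ℝ)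
    (b : (k : ℕ) → Fin (d k) → ℝ)
    (lhat uhat : (k : ℕ) → Fin (d k) → ℝ)
    (l u : (k : ℕ) → Fin (d k) → ℝ)
    (Wn : Fin (d (n-1)) → ℝ) (bn : ℝ)
    (x z : (k : ℕ) → Fin (d k) → ℝ)
    (α β0 β1 : (k : ℕ) → Fin (d k) → ℝ)
    (βI : (k : ℕ) → (Fin (d k) → Fin (d (k-1)) → Bool) → Fin (d k) → ℝ) : ℝ :=
  ((∑ j, Wn j * x (n-1) j) + bn)
  + ∑ k ∈ Finset.Icc 1 (n-1),
      ( (∑ i, α k i * ((∑ j, W k i j * x (k-1) j) + b k i - x k i))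
      + (∑ i, β0 k i * (x k i - uhat k i * z k i))
      + (∑ i, β1 k i * (x k i - ((∑ j, W k i j * x (k-1) j) + b k i)
          + lhat k i * (1 - z k i)))
      + (∑ I ∈ Ek (d k) (d (k-1)), ∑ i, βI k I i *
          (x k i - andRHS (W k) (b k) (l (k-1)) (u (k-1)) I (x (k-1)) (z k) i)) )

/-
The Lagrangian is affine in the multipliers, and the mask-indexed ones `β_{k,I}` occur only in
the Anderson term. In the Anderson right-hand side the unmasked row sum
`∑ j, W i j * (1 - mval I i j) * Ǔ i j` is the full row sum of `W ⊙ Ǔ`, which does not depend on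
`I`, minus the masked one. After this split each `β_{k,I}[i]` is multiplied by an `I`-independent
quantity times one of `1`, `W[i,j] I[i,j]` or the two masked row sums, so summing over the masks
leaves exactly the four statistics.
-/

section AndersonTerm

variable {m n : ℕ} (W : Fin m → Fin n → ℝ) (b : Fin m → ℝ) (l u : Fin n → ℝ)
  (x : Fin n → ℝ) (xk z : Fin m → ℝ)

theorem andRHS_eq (I : Fin m → Fin n → Bool) (i : Fin m) :
    andRHS W b l u I x z i
      = (∑ j, W i j * mval I i j * x j) + z i * (b i + ∑ j, W i j * cUmat W l u i j)
        - (1 - z i) * (∑ j, W i j * mval I i j * cLmat W l u i j)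
        - z i * (∑ j, W i j * mval I i j * cUmat W l u i j) := by
  have hsplit : (∑ j, W i j * (1 - mval I i j) * cUmat W l u i j)
      = (∑ j, W i j * cUmat W l u i j) - ∑ j, W i j * mval I i j * cUmat W l u i j := by
    rw [← sum_sub_distrib]
    exact sum_congr rfl fun j _ => by ring
  rw [andRHS, hsplit]
  ring

theorem sum_mul_sub_andRHS (I : Fin m → Fin n → Bool) (β : Fin m → ℝ) :
    ∑ i, β i * (xk i - andRHS W b l u I x z i)
      = ∑ i, (xk i - z i * (b i + ∑ j, W i j * cUmat W l u i j)) * β i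
        - ∑ j, x j * ∑ i, W i j * mval I i j * β i
        + ∑ i, (1 - z i) * ((∑ j, W i j * mval I i j * cLmat W l u i j) * β i)
        + ∑ i, z i * ((∑ j, W i j * mval I i j * cUmat W l u i j) * β i) := by
  have hswap : ∑ j, x j * ∑ i, W i j * mval I i j * β i
      = ∑ i, β i * ∑ j, W i j * mval I i j * x j := by
    simp only [mul_sum]
    rw [sum_comm]
    exact sum_congr rfl fun i _ => sum_congr rfl fun j _ => by ring
  rw [hswap, ← sum_sub_distrib, ← sum_add_distrib, ← sum_add_distrib]
  refine sum_congr rfl fun i _ => ?_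
  rw [andRHS_eq]
  ring

theorem sum_sum_mul_sub_andRHS (s : Finset (Fin m → Fin n → Bool))
    (β : (Fin m → Fin n → Bool) → Fin m → ℝ) :
    ∑ I ∈ s, ∑ i, β I i * (xk i - andRHS W b l u I x z i)
      = ∑ i, (xk i - z i * (b i + ∑ j, W i j * cUmat W l u i j)) * ∑ I ∈ s, β I i
        - ∑ j, x j * ∑ I ∈ s, ∑ i, W i j * mval I i j * β I i
        + ∑ i, (1 - z i) * ∑ I ∈ s, (∑ j, W i j * mval I i j * cLmat W l u i j) * β I i
        + ∑ i, z i * ∑ I ∈ s, (∑ j, W i j * mval I i j * cUmat W l u i j) * β I i := by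
  simp only [sum_mul_sub_andRHS, sum_add_distrib, sum_sub_distrib, mul_sum]
  rw [sum_comm (s := s), sum_comm (s := s) (t := univ (α := Fin n)), sum_comm (s := s),
    sum_comm (s := s)]

theorem sum_sum_mul_sub_andRHS_eq_of_stats (s : Finset (Fin m → Fin n → Bool))
    (β β' : (Fin m → Fin n → Bool) → Fin m → ℝ)
    (h₁ : ∀ i, ∑ I ∈ s, β I i = ∑ I ∈ s, β' I i)
    (h₂ : ∀ j, ∑ I ∈ s, ∑ i, W i j * mval I i j * β I i
      = ∑ I ∈ s, ∑ i, W i j * mval I i j * β' I i)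
    (h₃ : ∀ i, ∑ I ∈ s, (∑ j, W i j * mval I i j * cLmat W l u i j) * β I i
      = ∑ I ∈ s, (∑ j, W i j * mval I i j * cLmat W l u i j) * β' I i)
    (h₄ : ∀ i, ∑ I ∈ s, (∑ j, W i j * mval I i j * cUmat W l u i j) * β I i
      = ∑ I ∈ s, (∑ j, W i j * mval I i j * cUmat W l u i j) * β' I i) :
    ∑ I ∈ s, ∑ i, β I i * (xk i - andRHS W b l u I x z i)
      = ∑ I ∈ s, ∑ i, β' I i * (xk i - andRHS W b l u I x z i) := by
  simp only [sum_sum_mul_sub_andRHS, h₁, h₂, h₃, h₄]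

end AndersonTerm

theorem lagrangian_sufficient_statistics_general
    (n : ℕ) (d : ℕ → ℕ)
    (W : (k : ℕ) → Fin (d k) → Fin (d (k-1)) → ℝ)
    (b : (k : ℕ) → Fin (d k) → ℝ)
    (lhat uhat l u : (k : ℕ) → Fin (d k) → ℝ)
    (Wn : Fin (d (n-1)) → ℝ) (bn : ℝ)
    (β0 β1 β0' β1' : (k : ℕ) → Fin (d k) → ℝ)
    (βI βI' : (k : ℕ) → (Fin (d k) → Fin (d (k-1)) → Bool) → Fin (d k) → ℝ)
    (heq0 : ∀ k ∈ Finset.Icc 1 (n-1), ∀ i, β0 k i = β0' k i)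
    (heq1 : ∀ k ∈ Finset.Icc 1 (n-1), ∀ i, β1 k i = β1' k i)
    (hstat1 : ∀ k ∈ Finset.Icc 1 (n-1), ∀ i,
      (∑ I ∈ Ek (d k) (d (k-1)), βI k I i)
        = ∑ I ∈ Ek (d k) (d (k-1)), βI' k I i)
    (hstat2 : ∀ k ∈ Finset.Icc 1 (n-1), ∀ j,
      (∑ I ∈ Ek (d k) (d (k-1)), ∑ i, W k i j * mval I i j * βI k I i)
        = ∑ I ∈ Ek (d k) (d (k-1)), ∑ i, W k i j * mval I i j * βI' k I i)
    (hstat3 : ∀ k ∈ Finset.Icc 1 (n-1), ∀ i,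
      (∑ I ∈ Ek (d k) (d (k-1)),
          (∑ j, W k i j * mval I i j * cLmat (W k) (l (k-1)) (u (k-1)) i j)
            * βI k I i)
        = ∑ I ∈ Ek (d k) (d (k-1)),
            (∑ j, W k i j * mval I i j * cLmat (W k) (l (k-1)) (u (k-1)) i j)
              * βI' k I i)
    (hstat4 : ∀ k ∈ Finset.Icc 1 (n-1), ∀ i,
      (∑ I ∈ Ek (d k) (d (k-1)),
          (∑ j, W k i j * mval I i j * cUmat (W k) (l (k-1)) (u (k-1)) i j)
            * βI k I i)
        = ∑ I ∈ Ek (d k) (d (k-1)),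
            (∑ j, W k i j * mval I i j * cUmat (W k) (l (k-1)) (u (k-1)) i j)
              * βI' k I i) :
    ∀ (x z : (k : ℕ) → Fin (d k) → ℝ) (α : (k : ℕ) → Fin (d k) → ℝ),
      lagr n d W b lhat uhat l u Wn bn x z α β0 β1 βI
        = lagr n d W b lhat uhat l u Wn bn x z α β0' β1' βI' := by
  intro x z α
  unfold lagr
  refine congrArg _ (sum_congr rfl fun k hk => ?_)
  rw [sum_sum_mul_sub_andRHS_eq_of_stats (h₁ := hstat1 k hk) (h₂ := hstat2 k hk)
    (h₃ := hstat3 k hk) (h₄ := hstat4 k hk)]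
  simp only [heq0 k hk, heq1 k hk]

/-- Sufficient statistics for the Lagrangian (core of Fact 3): two
nonnegative dual assignments `β`, `β′` that agree on `β_{k,0}`, `β_{k,1}` and
on the four linearly-sized sufficient statistics at every layer give the same
Lagrangian value at every primal point `(x, z)` and every `α`; that is, the
Lagrangian depends on the exponentially many dual variables only through
these statistics. -/
theorem lagrangian_sufficient_statistics
    (n : ℕ) (hn : 1 ≤ n) (d : ℕ → ℕ)
    (W : (k : ℕ) → Fin (d k) → Fin (d (k-1)) → ℝ)
    (b : (k : ℕ) → Fin (d k) → ℝ)
    (lhat uhat l u : (k : ℕ) → Fin (d k) → ℝ)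
    (hblu : ∀ k, ∀ i, l k i ≤ u k i)
    (hbhat : ∀ k, ∀ i, lhat k i ≤ uhat k i)
    (Wn : Fin (d (n-1)) → ℝ) (bn : ℝ)
    (β0 β1 β0' β1' : (k : ℕ) → Fin (d k) → ℝ)
    (βI βI' : (k : ℕ) → (Fin (d k) → Fin (d (k-1)) → Bool) → Fin (d k) → ℝ)
    (hβ0 : ∀ k ∈ Finset.Icc 1 (n-1), ∀ i, 0 ≤ β0 k i)
    (hβ1 : ∀ k ∈ Finset.Icc 1 (n-1), ∀ i, 0 ≤ β1 k i)
    (hβI : ∀ k ∈ Finset.Icc 1 (n-1), ∀ I ∈ Ek (d k) (d (k-1)), ∀ i, 0 ≤ βI k I i)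
    (hβ0' : ∀ k ∈ Finset.Icc 1 (n-1), ∀ i, 0 ≤ β0' k i)
    (hβ1' : ∀ k ∈ Finset.Icc 1 (n-1), ∀ i, 0 ≤ β1' k i)
    (hβI' : ∀ k ∈ Finset.Icc 1 (n-1), ∀ I ∈ Ek (d k) (d (k-1)), ∀ i, 0 ≤ βI' k I i)
    (heq0 : ∀ k ∈ Finset.Icc 1 (n-1), ∀ i, β0 k i = β0' k i)
    (heq1 : ∀ k ∈ Finset.Icc 1 (n-1), ∀ i, β1 k i = β1' k i)
    (hstat1 : ∀ k ∈ Finset.Icc 1 (n-1), ∀ i,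
      (∑ I ∈ Ek (d k) (d (k-1)), βI k I i)
        = ∑ I ∈ Ek (d k) (d (k-1)), βI' k I i)
    (hstat2 : ∀ k ∈ Finset.Icc 1 (n-1), ∀ j,
      (∑ I ∈ Ek (d k) (d (k-1)), ∑ i, W k i j * mval I i j * βI k I i)
        = ∑ I ∈ Ek (d k) (d (k-1)), ∑ i, W k i j * mval I i j * βI' k I i)
    (hstat3 : ∀ k ∈ Finset.Icc 1 (n-1), ∀ i,
      (∑ I ∈ Ek (d k) (d (k-1)),
          (∑ j, W k i j * mval I i j * cLmat (W k) (l (k-1)) (u (k-1)) i j)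
            * βI k I i)
        = ∑ I ∈ Ek (d k) (d (k-1)),
            (∑ j, W k i j * mval I i j * cLmat (W k) (l (k-1)) (u (k-1)) i j)
              * βI' k I i)
    (hstat4 : ∀ k ∈ Finset.Icc 1 (n-1), ∀ i,
      (∑ I ∈ Ek (d k) (d (k-1)),
          (∑ j, W k i j * mval I i j * cUmat (W k) (l (k-1)) (u (k-1)) i j)
            * βI k I i)
        = ∑ I ∈ Ek (d k) (d (k-1)),
            (∑ j, W k i j * mval I i j * cUmat (W k) (l (k-1)) (u (k-1)) i j)
              * βI' k I i) :
    ∀ (x z : (k : ℕ) → Fin (d k) → ℝ) (α : (k : ℕ) → Fin (d k) → ℝ),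
      lagr n d W b lhat uhat l u Wn bn x z α β0 β1 βI
        = lagr n d W b lhat uhat l u Wn bn x z α β0' β1' βI' :=
  lagrangian_sufficient_statistics_general n d W b lhat uhat l u Wn bn β0 β1 β0' β1' βI βI' heq0
    heq1 hstat1 hstat2 hstat3 hstat4
end

section
/- Projection of the Big-M relaxation equals the Planet relaxation for an ambiguous ReLU (Appendix C): Let l̂ < 0 < û be real numbers and let x̂ ∈ [l̂, û] and x ∈ ℝ satisfy x ≥ 0 and x ≥ x̂. Then there exists z ∈ [0, 1] such that x ≤ û·z and x ≤ x̂ − l̂·(1 − z) if and only if x ≤ û·(x̂ − l̂)/(û − l̂). -/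
/-- Projection of the Big-M relaxation equals the Planet relaxation for an
ambiguous ReLU (Appendix C): for an ambiguous neuron (`l̂ < 0 < û`) with
`x̂ ∈ [l̂, û]`, `x ≥ 0`, `x ≥ x̂`, a feasible relaxed binary `z ∈ [0,1]`
exists iff the Planet upper constraint holds. -/
theorem bigM_projection_planet_ambiguous
    (lhat uhat xhat x : ℝ)
    (hl : lhat < 0) (hu : 0 < uhat)
    (hxl : lhat ≤ xhat) (hxu : xhat ≤ uhat)
    (hx0 : 0 ≤ x) (hxhat : xhat ≤ x) :
    (∃ z : ℝ, 0 ≤ z ∧ z ≤ 1 ∧ x ≤ uhat * z ∧ x ≤ xhat - lhat * (1 - z)) ↔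
      x ≤ uhat * (xhat - lhat) / (uhat - lhat) := by
  have hul : 0 < uhat - lhat := by linarith
  constructor
  · rintro ⟨z, hz0, hz1, h1, h2⟩
    rw [le_div_iff₀ hul]
    nlinarith
  · intro h
    rw [le_div_iff₀ hul] at h
    refine ⟨x / uhat, by positivity, ?_, ?_, ?_⟩
    · rw [div_le_one hu]; nlinarith
    · rw [mul_div_cancel₀ _ hu.ne']
    · have heq : xhat - lhat * (1 - x / uhat) = (uhat * (xhat - lhat) + lhat * x) / uhat := by
        field_simp; ring
      rw [heq, le_div_iff₀ hu]
      nlinarith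
end

section
/- Projection of the Big-M relaxation for stable ReLUs (Appendix C, blocking and passing cases): Let l̂ ≤ û be real numbers and let x̂ ∈ [l̂, û] and x ∈ ℝ satisfy x ≥ 0 and x ≥ x̂. (i) If û ≤ 0, then there exists z ∈ [0, 1] with x ≤ û·z and x ≤ x̂ − l̂·(1 − z) if and only if x = 0. (ii) If l̂ ≥ 0, then there exists z ∈ [0, 1] with x ≤ û·z and x ≤ x̂ − l̂·(1 − z) if and only if x = x̂. -/
/-- Projection of the Big-M relaxation for stable ReLUs (Appendix C):
(i) blocking case `û ≤ 0`: a feasible `z ∈ [0,1]` exists iff `x = 0`;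
(ii) passing case `l̂ ≥ 0`: a feasible `z ∈ [0,1]` exists iff `x = x̂`. -/
theorem bigM_projection_planet_stable
    (lhat uhat xhat x : ℝ)
    (hlu : lhat ≤ uhat)
    (hxl : lhat ≤ xhat) (hxu : xhat ≤ uhat)
    (hx0 : 0 ≤ x) (hxhat : xhat ≤ x) :
    (uhat ≤ 0 →
      ((∃ z : ℝ, 0 ≤ z ∧ z ≤ 1 ∧ x ≤ uhat * z ∧ x ≤ xhat - lhat * (1 - z)) ↔ x = 0)) ∧
    (0 ≤ lhat →
      ((∃ z : ℝ, 0 ≤ z ∧ z ≤ 1 ∧ x ≤ uhat * z ∧ x ≤ xhat - lhat * (1 - z)) ↔ x = xhat)) := by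
  constructor
  · intro hu
    constructor
    · rintro ⟨z, hz0, hz1, hxu', hxl'⟩
      have : uhat * z ≤ 0 := mul_nonpos_of_nonpos_of_nonneg hu hz0
      linarith
    · rintro rfl
      exact ⟨0, le_refl 0, zero_le_one, by simp, by nlinarith⟩
  · intro hl
    constructor
    · rintro ⟨z, hz0, hz1, hxu', hxl'⟩
      have : 0 ≤ lhat * (1 - z) := mul_nonneg hl (by linarith)
      linarith
    · rintro rfl
      exact ⟨1, zero_le_one, le_refl 1, by linarith [mul_one uhat], by simp⟩
end

section
/- The Planet relaxation of an ambiguous ReLU is the convex hull of the ReLU graph (Section 2.1): Let l̂ < 0 < û be real numbers. Then the set {(x̂, x) ∈ ℝ² : l̂ ≤ x̂ ≤ û, x ≥ 0, x ≥ x̂, (û − l̂)·x ≤ û·(x̂ − l̂)} equals the convex hull of the set {(t, max(t, 0)) : t ∈ [l̂, û]}. -/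
/-- The Planet relaxation of an ambiguous ReLU is the convex hull of the
ReLU graph (Section 2.1): for `l̂ < 0 < û`, the triangle
`{(x̂, x) : l̂ ≤ x̂ ≤ û, x ≥ 0, x ≥ x̂, (û − l̂)x ≤ û(x̂ − l̂)}`
equals the convex hull of `{(t, max t 0) : t ∈ [l̂, û]}`. -/
theorem planet_is_convex_hull_of_relu_graph
    (lhat uhat : ℝ) (hl : lhat < 0) (hu : 0 < uhat) :
    {p : ℝ × ℝ | lhat ≤ p.1 ∧ p.1 ≤ uhat ∧ 0 ≤ p.2 ∧ p.1 ≤ p.2 ∧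
        (uhat - lhat) * p.2 ≤ uhat * (p.1 - lhat)}
      = convexHull ℝ {p : ℝ × ℝ | ∃ t ∈ Set.Icc lhat uhat, p = (t, max t 0)} := by
  set S : Set (ℝ × ℝ) := {p : ℝ × ℝ | ∃ t ∈ Set.Icc lhat uhat, p = (t, max t 0)}
  set T : Set (ℝ × ℝ) := {p : ℝ × ℝ | lhat ≤ p.1 ∧ p.1 ≤ uhat ∧ 0 ≤ p.2 ∧ p.1 ≤ p.2 ∧
        (uhat - lhat) * p.2 ≤ uhat * (p.1 - lhat)}
  have hTconv : Convex ℝ T := by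
    intro x hx y hy a b ha hb hab
    obtain ⟨h1, h2, h3, h4, h5⟩ := hx
    obtain ⟨k1, k2, k3, k4, k5⟩ := hy
    have h6 : (a + b) * (uhat * lhat) = uhat * lhat := by rw [hab]; ring
    refine ⟨?_, ?_, ?_, ?_, ?_⟩ <;> simp only [Prod.fst_add, Prod.snd_add,
      Prod.smul_fst, Prod.smul_snd, smul_eq_mul] <;>
      nlinarith [mul_le_mul_of_nonneg_left h5 ha, mul_le_mul_of_nonneg_left k5 hb, h6]
  apply le_antisymm
  · -- T ⊆ convexHull S : each point is a combination of (l̂,0), (0,0), (û,û)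
    intro p hp
    obtain ⟨h1, h2, h3, h4, h5⟩ := hp
    have hA : ((lhat, 0) : ℝ × ℝ) ∈ convexHull ℝ S := subset_convexHull ℝ S
      ⟨lhat, ⟨le_refl _, le_of_lt (hl.trans hu)⟩, by simp [max_eq_right hl.le]⟩
    have hB : ((0, 0) : ℝ × ℝ) ∈ convexHull ℝ S := subset_convexHull ℝ S
      ⟨0, ⟨hl.le, hu.le⟩, by simp⟩
    have hC : ((uhat, uhat) : ℝ × ℝ) ∈ convexHull ℝ S := subset_convexHull ℝ S
      ⟨uhat, ⟨(hl.trans hu).le, le_refl _⟩, by simp [max_eq_left hu.le]⟩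
    set a : ℝ := (p.1 - p.2) / lhat with ha_def
    set c : ℝ := p.2 / uhat with hc_def
    set b : ℝ := 1 - a - c with hb_def
    have hlne : lhat ≠ 0 := ne_of_lt hl
    have hune : uhat ≠ 0 := ne_of_gt hu
    have ha0 : 0 ≤ a := by
      rw [ha_def, div_nonneg_iff]
      right
      exact ⟨by linarith, hl.le⟩
    have hc0 : 0 ≤ c := div_nonneg h3 hu.le
    have e1 : a * lhat = p.1 - p.2 := by rw [ha_def]; field_simp
    have e2 : c * uhat = p.2 := by rw [hc_def]; field_simp
    have hb0 : 0 ≤ b := by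
      rw [hb_def]
      nlinarith [e1, e2, h5, mul_pos (neg_pos.mpr hl) hu]
    have hsum : a + b + c = 1 := by rw [hb_def]; ring
    have hcomb : a • ((lhat, 0) : ℝ × ℝ) + b • ((0, 0) : ℝ × ℝ)
        + c • ((uhat, uhat) : ℝ × ℝ) = p := by
      ext <;> simp only [Prod.fst_add, Prod.snd_add, Prod.smul_fst, Prod.smul_snd,
        smul_eq_mul, mul_zero, add_zero, zero_add] <;> linarith
    rw [← hcomb]
    have hmem := Convex.sum_mem (convex_convexHull ℝ S)
      (show ∀ i ∈ (Finset.univ : Finset (Fin 3)), 0 ≤ ![a, b, c] i from by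
        intro i _; fin_cases i <;> simpa)
      (show ∑ i : Fin 3, ![a, b, c] i = 1 from by
        simp [Fin.sum_univ_three]; linarith)
      (show ∀ i ∈ (Finset.univ : Finset (Fin 3)),
          ![((lhat, 0) : ℝ × ℝ), (0, 0), (uhat, uhat)] i ∈ convexHull ℝ S from by
        intro i _; fin_cases i <;> simpa)
    simpa [Fin.sum_univ_three] using hmem
  · refine convexHull_min ?_ hTconv
    rintro p ⟨t, ⟨htl, htu⟩, rfl⟩
    refine ⟨htl, htu, le_max_right _ _, le_max_left _ _, ?_⟩
    show (uhat - lhat) * max t 0 ≤ uhat * (t - lhat)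
    rcases le_total t 0 with ht | ht
    · rw [max_eq_right ht]; nlinarith
    · rw [max_eq_left ht]; nlinarith
end

section
/- Exactness of the Big-M MIP encoding of a ReLU (validity of the MIP formulation M_k): Let l̂ ≤ û be real numbers, and let x̂ ∈ [l̂, û] and x ∈ ℝ. Then there exists z ∈ {0, 1} such that x ≥ x̂, x ≥ 0, x ≤ û·z and x ≤ x̂ − l̂·(1 − z), if and only if x = max(x̂, 0). -/
/-- Exactness of the Big-M MIP encoding of a ReLU: for valid pre-activation
bounds `l̂ ≤ x̂ ≤ û`, there is a binary `z ∈ {0,1}` satisfying the four Big-M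
constraints if and only if `x = max(x̂, 0)`. -/
theorem bigM_mip_exact
    (lhat uhat xhat x : ℝ)
    (hlu : lhat ≤ uhat) (hxl : lhat ≤ xhat) (hxu : xhat ≤ uhat) :
    (∃ z : ℝ, (z = 0 ∨ z = 1) ∧
        xhat ≤ x ∧ 0 ≤ x ∧ x ≤ uhat * z ∧ x ≤ xhat - lhat * (1 - z)) ↔
      x = max xhat 0 := by
  constructor
  · rintro ⟨z, hz | hz, h1, h2, h3, h4⟩ <;> subst hz <;> simp at h3 h4
    · have hx0 : x = 0 := le_antisymm h3 h2
      subst hx0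
      exact (max_eq_right (le_trans h1 (le_refl 0))).symm
    · have hx : x = xhat := le_antisymm h4 h1
      subst hx
      exact (max_eq_left h2).symm
  · rintro rfl
    rcases le_or_gt 0 xhat with h | h
    · refine ⟨1, Or.inr rfl, ?_, ?_, ?_, ?_⟩ <;> simp [max_eq_left h] <;> linarith
    · refine ⟨0, Or.inl rfl, ?_, ?_, ?_, ?_⟩ <;> simp [max_eq_right h.le] <;> linarith
end

section
/- Explicit pre-activation bounds make the relaxation at least as tight as the original Anderson formulation (Section 2.2.1 / Appendix F): Let w ∈ ℝ^n, b ∈ ℝ, l ≤ u ∈ ℝ^n, M⁻ = Σ_j w_j Ľ_j + b, M⁺ = Σ_j w_j Ǔ_j + b, and suppose the pre-activation bounds satisfy M⁻ ≤ l̂ and û ≤ M⁺. Then every point (x, y, z) ∈ ℝ^n × ℝ × ℝ with 0 ≤ z ≤ 1 that satisfies the Big-M upper constraints y ≤ û·z and y ≤ (w·x + b) − l̂·(1 − z) also satisfies y ≤ M⁺·z and y ≤ (w·x + b) − M⁻·(1 − z), i.e., the Anderson constraints for the all-zero and all-one masks. Consequently the set A (Big-M constraints with bounds l̂, û plus the Anderson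 constraints for all masks that are neither all-zero nor all-one) is contained in the original set A′ (Anderson constraints for all masks, including all-zero and all-one, plus the variable box constraints). -/
open Finset

/-- Explicit pre-activation bounds make the relaxation at least as tight as
the original Anderson formulation (Section 2.2.1 / Appendix F): if
`M⁻ ≤ l̂` and `û ≤ M⁺`, then the Big-M upper constraints with bounds
`l̂, û` imply the Anderson constraints for the all-zero and all-one masks;
consequently the set `A` (Big-M constraints with bounds `l̂, û` plus the
Anderson constraints for nontrivial masks) is contained in the original set
`A′` (Anderson constraints for all masks plus box constraints). -/
theorem preactivation_bounds_tighten_anderson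
    {n : ℕ} (w : Fin n → ℝ) (b : ℝ) (l u : Fin n → ℝ)
    (hlu : ∀ j, l j ≤ u j)
    (lhat uhat : ℝ)
    (hm : (∑ j, w j * cLvec w l u j) + b ≤ lhat)
    (hp : uhat ≤ (∑ j, w j * cUvec w l u j) + b) :
    (∀ (x : Fin n → ℝ) (y z : ℝ), 0 ≤ z → z ≤ 1 →
      y ≤ uhat * z →
      y ≤ ((∑ j, w j * x j) + b) - lhat * (1 - z) →
      y ≤ andersonRHS1 w b l u (fun _ => false) x z ∧
        y ≤ andersonRHS1 w b l u (fun _ => true) x z) ∧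
    {p : (Fin n → ℝ) × ℝ × ℝ |
        (∀ j, l j ≤ p.1 j ∧ p.1 j ≤ u j) ∧
        (0 ≤ p.2.2 ∧ p.2.2 ≤ 1) ∧
        0 ≤ p.2.1 ∧
        (∑ j, w j * p.1 j) + b ≤ p.2.1 ∧
        p.2.1 ≤ uhat * p.2.2 ∧
        p.2.1 ≤ ((∑ j, w j * p.1 j) + b) - lhat * (1 - p.2.2) ∧
        (∀ ι : Fin n → Bool, (¬ ∀ j, ι j = false) → (¬ ∀ j, ι j = true) →
          p.2.1 ≤ andersonRHS1 w b l u ι p.1 p.2.2)}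
      ⊆
      {p : (Fin n → ℝ) × ℝ × ℝ |
        (∀ j, l j ≤ p.1 j ∧ p.1 j ≤ u j) ∧
        (0 ≤ p.2.2 ∧ p.2.2 ≤ 1) ∧
        0 ≤ p.2.1 ∧
        (∑ j, w j * p.1 j) + b ≤ p.2.1 ∧
        (∀ ι : Fin n → Bool, p.2.1 ≤ andersonRHS1 w b l u ι p.1 p.2.2)} := by
  
  have key : ∀ (x : Fin n → ℝ) (y z : ℝ), 0 ≤ z → z ≤ 1 →
      y ≤ uhat * z →
      y ≤ ((∑ j, w j * x j) + b) - lhat * (1 - z) →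
      y ≤ andersonRHS1 w b l u (fun _ => false) x z ∧
        y ≤ andersonRHS1 w b l u (fun _ => true) x z := by
    intro x y z hz0 hz1 h1 h2
    constructor
    · unfold andersonRHS1
      simp only [if_neg (by simp : ¬(false = true)), if_pos rfl]
      have : uhat * z ≤ ((∑ j, w j * cUvec w l u j) + b) * z :=
        mul_le_mul_of_nonneg_right hp hz0
      calc y ≤ uhat * z := h1
        _ ≤ ((∑ j, w j * cUvec w l u j) + b) * z := this
        _ = (∑ j, w j * (0:ℝ) * x j) + z * b
              - (∑ j, w j * (0:ℝ) * cLvec w l u j) * (1 - z)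
              + (∑ j, w j * 1 * cUvec w l u j) * z := by
            simp [mul_zero, zero_mul, Finset.sum_const_zero, mul_one]; ring
    · unfold andersonRHS1
      simp only [if_pos rfl]
      have : ((∑ j, w j * cLvec w l u j) + b) * (1 - z) ≤ lhat * (1 - z) :=
        mul_le_mul_of_nonneg_right hm (by linarith)
      calc y ≤ ((∑ j, w j * x j) + b) - lhat * (1 - z) := h2
        _ ≤ ((∑ j, w j * x j) + b) - ((∑ j, w j * cLvec w l u j) + b) * (1 - z) := by linarith
        _ = (∑ j, w j * (1:ℝ) * x j) + z * b
              - (∑ j, w j * (1:ℝ) * cLvec w l u j) * (1 - z)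
              + (∑ j, w j * (0:ℝ) * cUvec w l u j) * z := by
            simp [mul_one, mul_zero, zero_mul, Finset.sum_const_zero]; ring
  refine ⟨key, ?_⟩
  rintro ⟨x, y, z⟩ ⟨hbox, ⟨hz0, hz1⟩, hy0, hlb, h1, h2, hand⟩
  refine ⟨hbox, ⟨hz0, hz1⟩, hy0, hlb, ?_⟩
  intro ι
  by_cases hf : ∀ j, ι j = false
  · have : ι = fun _ => false := funext hf
    rw [this]; exact (key x y z hz0 hz1 h1 h2).1
  · by_cases ht : ∀ j, ι j = true
    · have : ι = fun _ => true := funext ht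
      rw [this]; exact (key x y z hz0 hz1 h1 h2).2
    · exact hand ι hf ht
end
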